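/- arXiv:0705.3397 — 5 statements merged into one kernel-verified Lean document; each statement's English description precedes it below -/
import Mathlib

section
/- Let t_p > 0 and h, h_i be real numbers with 1 + h > 0 and 4 h_i t_p > (1+h)^2, set a = (1+h)/(2 t_p) > 0, b = (1/(2 t_p))·√(4 h_i t_p − (1+h)^2) > 0, and y(t) = e^{−a(t−1)}(cos(b(t−1)) + (a/b)·sin(b(t−1))). Then for all t ≥ 1 one has y(t) ≥ −e^{−π a/b}, with equality at t = 1 + π/b. In particular the overshoot of the controlled variable is PO_y = e^{−π a/b}. -/
/-!
In the rescaled time `s = b (t - 1)` the response is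
`f r s = e^{-r s} (cos s + r sin s)` (`dampedResponse`) with `r = a / b`, whose derivative is `-(1 + r²) e^{-r s} sin s`. So `f r` decreases on `[0, π]` from
`f r 0 = 1` to `f r π = -e^{-r π}`. Beyond `π` the identity `f r (s + π) = -e^{-r π} f r s`
reduces everything to the bound `f r ≤ 1` on `[0, ∞)`, which for `s ≥ π` follows from
`e^{-r s} (1 + r) ≤ e^{-r π} (1 + r π) ≤ 1`.
-/

open Real Set

noncomputable def dampedResponse (r s : ℝ) : ℝ :=
  exp (-r * s) * (cos s + r * sin s)

namespace dampedResponse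

theorem hasDerivAt (r s : ℝ) :
    HasDerivAt (dampedResponse r) (-(1 + r ^ 2) * exp (-r * s) * sin s) s := by
  have hexp : HasDerivAt (fun s => exp (-r * s)) (exp (-r * s) * -r) s := by
    simpa using ((hasDerivAt_id s).const_mul (-r)).exp
  have htrig : HasDerivAt (fun s => cos s + r * sin s) (-sin s + r * cos s) s :=
    (hasDerivAt_cos s).add ((hasDerivAt_sin s).const_mul r)
  exact (hexp.mul htrig).congr_deriv (by ring)

theorem continuous (r : ℝ) : Continuous (dampedResponse r) := by
  unfold dampedResponse
  fun_prop

@[simp]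
theorem apply_zero (r : ℝ) : dampedResponse r 0 = 1 := by
  simp [dampedResponse]

@[simp]
theorem apply_pi (r : ℝ) : dampedResponse r π = -exp (-r * π) := by
  simp [dampedResponse]

theorem apply_add_pi (r s : ℝ) :
    dampedResponse r (s + π) = -exp (-r * π) * dampedResponse r s := by
  simp only [dampedResponse, cos_add_pi, sin_add_pi, mul_add, exp_add]
  ring

theorem antitoneOn_Icc_zero_pi (r : ℝ) : AntitoneOn (dampedResponse r) (Icc 0 π) := by
  refine antitoneOn_of_deriv_nonpos (convex_Icc 0 π) (continuous r).continuousOn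
    (fun s _ => (hasDerivAt r s).differentiableAt.differentiableWithinAt) fun s hs => ?_
  rw [interior_Icc] at hs
  rw [(hasDerivAt r s).deriv, neg_mul, neg_mul, neg_nonpos]
  have hsin : 0 ≤ sin s := sin_nonneg_of_nonneg_of_le_pi hs.1.le hs.2.le
  positivity

theorem le_one {r s : ℝ} (hr : 0 ≤ r) (hs : 0 ≤ s) : dampedResponse r s ≤ 1 := by
  rcases le_total s π with hsπ | hπs
  · simpa using antitoneOn_Icc_zero_pi r ⟨le_rfl, pi_nonneg⟩ ⟨hs, hsπ⟩ hs
  have htrig : cos s + r * sin s ≤ 1 + r := by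
    nlinarith [cos_le_one s, sin_le_one s]
  have hdecay : exp (-r * s) ≤ exp (-r * π) := exp_le_exp.2 (by nlinarith)
  have hlinear : 1 + r ≤ exp (r * π) := by
    nlinarith [add_one_le_exp (r * π), pi_gt_three]
  calc dampedResponse r s ≤ exp (-r * s) * (1 + r) := by
        unfold dampedResponse; gcongr
    _ ≤ exp (-r * π) * (1 + r) := by gcongr
    _ ≤ exp (-r * π) * exp (r * π) := by gcongr
    _ = 1 := by rw [← exp_add]; simp

theorem neg_exp_le {r s : ℝ} (hr : 0 ≤ r) (hs : 0 ≤ s) :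
    -exp (-r * π) ≤ dampedResponse r s := by
  rcases le_total s π with hsπ | hπs
  · simpa using antitoneOn_Icc_zero_pi r ⟨hs, hsπ⟩ ⟨pi_nonneg, le_rfl⟩ hsπ
  have hshift := apply_add_pi r (s - π)
  rw [sub_add_cancel] at hshift
  rw [hshift, neg_mul (exp _), neg_le_neg_iff]
  exact mul_le_of_le_one_right (exp_pos _).le (le_one hr (sub_nonneg.2 hπs))

end dampedResponse

/-- Overshoot of the controlled variable of the underdamped Smith Predictor:
for `t ≥ 1`, `y(t) ≥ −e^{−πa/b}`, with equality at `t = 1 + π/b`,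
so `PO_y = e^{−πa/b}`. -/
theorem stmt4 (t_p h h_i a b : ℝ) (y : ℝ → ℝ)
    (htp : 0 < t_p) (hh : 1 + h > 0) (hub : 4 * h_i * t_p > (1 + h) ^ 2)
    (ha : a = (1 + h) / (2 * t_p))
    (hb : b = (1 / (2 * t_p)) * Real.sqrt (4 * h_i * t_p - (1 + h) ^ 2))
    (hy : ∀ t : ℝ, y t =
      Real.exp (-a * (t - 1)) * (Real.cos (b * (t - 1)) + (a / b) * Real.sin (b * (t - 1)))) :
    (∀ t : ℝ, 1 ≤ t → y t ≥ -Real.exp (-π * a / b)) ∧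
      y (1 + π / b) = -Real.exp (-π * a / b) := by
  have ha0 : 0 ≤ a := by rw [ha]; positivity
  have hb0 : 0 < b := by
    rw [hb]
    have : 0 < √(4 * h_i * t_p - (1 + h) ^ 2) := sqrt_pos.2 (by linarith)
    positivity
  have hy' : ∀ t, y t = dampedResponse (a / b) (b * (t - 1)) := fun t => by
    rw [hy, dampedResponse]
    congr 2
    field_simp
  have hexp : -(a / b) * π = -π * a / b := by ring
  refine ⟨fun t ht => ?_, ?_⟩
  · rw [hy', ← hexp]
    exact dampedResponse.neg_exp_le (div_nonneg ha0 hb0.le)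
      (mul_nonneg hb0.le (sub_nonneg.2 ht))
  · rw [hy', add_sub_cancel_left, mul_div_cancel₀ π hb0.ne', dampedResponse.apply_pi, hexp]
end

section
/- Let t_p > 0 and h, h_i be real numbers with 1 + h > 0 and 4 h_i t_p > (1+h)^2, set a = (1+h)/(2 t_p) > 0, b = (1/(2 t_p))·√(4 h_i t_p − (1+h)^2) > 0, y(t) = e^{−a(t−1)}(cos(b(t−1)) + (a/b)·sin(b(t−1))), and v(t) = y(t) + t_p·y'(t). Let φ be the unique number in (0, π) satisfying t_p·b·cos φ = (a·t_p − 1)·sin φ (equivalently, φ is the first positive root of tan φ = b·t_p/(a·t_p − 1), with φ = π/2 when a·t_p = 1). Then v(1 + φ/b) = −e^{−φ a/b}·√(1 − 2 a t_p + t_p^2(a^2+b^2)), v'(1 + φ/b) = 0, and v(t) ≥ −e^{−φ a/b}·√(1 − 2 a t_p + t_p^2(a^2+b^2)) for all t ≥ 1. In particular the controller-output overshoot is PO_v = e^{−φ a/b}·√(1 − 2 a t_p + t_p^2(a^2+b^2)). -/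
/-!
Write `r = a / b`, `s = √((a t_p - 1)² + (t_p b)²)` and `u = b (t - 1) - φ`. The defining equation of
`φ ∈ (0, π)` is the polar form `s sin φ = t_p b`, `s cos φ = a t_p - 1`, and with it the addition
formulas turn the controller output into `v t = -e^{-φ a / b} s · e^{-r u} (cos u + r sin u)`.
The last factor is `1` at `u = 0` and has derivative `-(1 + r²) e^{-r u} sin u`, so it increases on
`[-π, 0]` and decreases on `[0, π]`; for `u ≥ π` it is at most `e^{-r u} (1 + r) ≤ 1`.
-/

open Real Set

/-- With `r = a / b`, the step response is `y t = underdampedStep r (b * (t - 1))`. -/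
noncomputable def underdampedStep (r u : ℝ) : ℝ := exp (-r * u) * (cos u + r * sin u)

theorem underdampedStep_zero (r : ℝ) : underdampedStep r 0 = 1 := by
  simp [underdampedStep]

theorem hasDerivAt_underdampedStep (r u : ℝ) :
    HasDerivAt (underdampedStep r) (-(1 + r ^ 2) * exp (-r * u) * sin u) u := by
  have hexp : HasDerivAt (fun u => exp (-r * u)) (exp (-r * u) * -r) u := by
    simpa using ((hasDerivAt_id u).const_mul (-r)).exp
  exact (hexp.mul ((hasDerivAt_cos u).add ((hasDerivAt_sin u).const_mul r))).congr_deriv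
    (by simp only [Pi.add_apply]; ring)

theorem hasDerivAt_underdampedStep_comp (r b t₀ t : ℝ) :
    HasDerivAt (fun t => underdampedStep r (b * (t - t₀)))
      (-(1 + r ^ 2) * exp (-r * (b * (t - t₀))) * sin (b * (t - t₀)) * b) t :=
  (hasDerivAt_underdampedStep r _).comp t
    (((hasDerivAt_id t).sub_const t₀).const_mul b |>.congr_deriv (mul_one b))

theorem underdampedStep_le_one_of_mem_Icc (r : ℝ) {u : ℝ} (hu : u ∈ Icc (-π) π) :
    underdampedStep r u ≤ 1 := by
  have hcont : Continuous (underdampedStep r) :=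
    continuous_iff_continuousAt.2 fun x => (hasDerivAt_underdampedStep r x).continuousAt
  have hderiv (D : Set ℝ) (x : ℝ) : HasDerivWithinAt (underdampedStep r)
      (-(1 + r ^ 2) * exp (-r * x) * sin x) D x :=
    (hasDerivAt_underdampedStep r x).hasDerivWithinAt
  have hcoeff (x : ℝ) : 0 < (1 + r ^ 2) * exp (-r * x) := by positivity
  rw [← underdampedStep_zero r]
  rcases le_total u 0 with hu0 | hu0
  · refine monotoneOn_of_hasDerivWithinAt_nonneg (convex_Icc (-π) 0) hcont.continuousOn
      (fun x _ => hderiv _ x) (fun x hx => ?_) ⟨hu.1, hu0⟩ ⟨by linarith [pi_pos], le_rfl⟩ hu0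
    rw [interior_Icc] at hx
    nlinarith [hcoeff x, sin_neg_of_neg_of_neg_pi_lt hx.2 hx.1]
  · refine antitoneOn_of_hasDerivWithinAt_nonpos (convex_Icc 0 π) hcont.continuousOn
      (fun x _ => hderiv _ x) (fun x hx => ?_) ⟨le_rfl, pi_pos.le⟩ ⟨hu0, hu.2⟩ hu0
    rw [interior_Icc] at hx
    nlinarith [hcoeff x, sin_pos_of_pos_of_lt_pi hx.1 hx.2]

theorem underdampedStep_le_one_of_pi_le {r u : ℝ} (hr : 0 ≤ r) (hu : π ≤ u) :
    underdampedStep r u ≤ 1 := by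
  have hgrowth : 1 + r ≤ exp (r * u) := by
    nlinarith [add_one_le_exp (r * u), pi_gt_three, mul_le_mul_of_nonneg_left hu hr]
  calc underdampedStep r u ≤ exp (-r * u) * (1 + r) := by
        refine mul_le_mul_of_nonneg_left ?_ (exp_pos _).le
        nlinarith [cos_le_one u, sin_le_one u]
    _ ≤ exp (-r * u) * exp (r * u) := by gcongr
    _ = 1 := by rw [← exp_add]; simp

theorem underdampedStep_le_one {r u : ℝ} (hr : 0 ≤ r) (hu : -π ≤ u) : underdampedStep r u ≤ 1 := by
  rcases le_total u π with h | h
  · exact underdampedStep_le_one_of_mem_Icc r ⟨hu, h⟩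
  · exact underdampedStep_le_one_of_pi_le hr h

theorem sin_cos_mul_sqrt_of_mul_cos_eq_mul_sin {p q φ : ℝ} (hp : 0 < p) (hφ : φ ∈ Ioo 0 π)
    (h : p * cos φ = q * sin φ) :
    sin φ * √(q ^ 2 + p ^ 2) = p ∧ cos φ * √(q ^ 2 + p ^ 2) = q := by
  have hsin : 0 < sin φ := sin_pos_of_pos_of_lt_pi hφ.1 hφ.2
  have hsq : √(q ^ 2 + p ^ 2) ^ 2 = q ^ 2 + p ^ 2 := sq_sqrt (by positivity)
  have hsin' : sin φ * √(q ^ 2 + p ^ 2) = p := by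
    refine (sq_eq_sq₀ (by positivity) hp.le).1 ?_
    rw [mul_pow, hsq]
    linear_combination -(p * cos φ + q * sin φ) * h + p ^ 2 * sin_sq_add_cos_sq φ
  refine ⟨hsin', mul_left_cancel₀ hp.ne' ?_⟩
  linear_combination √(q ^ 2 + p ^ 2) * h + q * hsin'

theorem eq_of_mul_cos_eq_mul_sin {p q φ ψ : ℝ} (hp : 0 < p) (hφ : φ ∈ Ioo 0 π) (hψ : ψ ∈ Ioo 0 π)
    (hφq : p * cos φ = q * sin φ) (hψq : p * cos ψ = q * sin ψ) : φ = ψ := by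
  have hs : √(q ^ 2 + p ^ 2) ≠ 0 := (sqrt_pos.2 (by positivity)).ne'
  refine injOn_cos (Ioo_subset_Icc_self hφ) (Ioo_subset_Icc_self hψ) (mul_right_cancel₀ hs ?_)
  rw [(sin_cos_mul_sqrt_of_mul_cos_eq_mul_sin hp hφ hφq).2,
    (sin_cos_mul_sqrt_of_mul_cos_eq_mul_sin hp hψ hψq).2]

theorem underdampedStep_add_phase {r p s φ : ℝ} (hsin : sin φ * s = p) (hcos : cos φ * s = r * p - 1)
    (u : ℝ) :
    underdampedStep r (u + φ) + p * (-(1 + r ^ 2) * exp (-r * (u + φ)) * sin (u + φ)) =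
      -s * exp (-r * φ) * underdampedStep r u := by
  have hs : s ≠ 0 := by
    rintro rfl
    simp only [mul_zero] at hsin hcos
    rw [← hsin] at hcos
    norm_num at hcos
  have hsq : s ^ 2 = p ^ 2 + (r * p - 1) ^ 2 := by
    linear_combination (-s ^ 2) * sin_sq_add_cos_sq φ + (sin φ * s + p) * hsin
      + (cos φ * s + r * p - 1) * hcos
  have hbracket : cos (u + φ) + r * sin (u + φ) - p * (1 + r ^ 2) * sin (u + φ) =
      -s * (cos u + r * sin u) := by
    refine mul_right_cancel₀ hs ?_
    rw [sin_add, cos_add]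
    linear_combination (cos u + (r - p * (1 + r ^ 2)) * sin u) * hcos
      + (-sin u + (r - p * (1 + r ^ 2)) * cos u) * hsin + (cos u + r * sin u) * hsq
  unfold underdampedStep
  rw [show -r * (u + φ) = -r * φ + -r * u by ring, exp_add]
  linear_combination exp (-r * φ) * exp (-r * u) * hbracket

/-- Overshoot of the controller output of the underdamped Smith Predictor:
`φ` is the unique number in `(0, π)` with `t_p·b·cos φ = (a·t_p − 1)·sin φ`
(i.e. the first positive root of `tan φ = b t_p/(a t_p − 1)`), and
`v(1+φ/b) = −e^{−φa/b}·√(1 − 2 a t_p + t_p²(a²+b²))`, `v'(1+φ/b) = 0`, and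
`v(t) ≥ −e^{−φa/b}·√(1 − 2 a t_p + t_p²(a²+b²))` for all `t ≥ 1`; hence
`PO_v = e^{−φa/b}·√(1 − 2 a t_p + t_p²(a²+b²))`. -/
theorem stmt5 (t_p h h_i a b φ : ℝ) (y v : ℝ → ℝ)
    (htp : 0 < t_p) (hh : 1 + h > 0) (hub : 4 * h_i * t_p > (1 + h) ^ 2)
    (ha : a = (1 + h) / (2 * t_p))
    (hb : b = (1 / (2 * t_p)) * Real.sqrt (4 * h_i * t_p - (1 + h) ^ 2))
    (hy : ∀ t : ℝ, y t =
      Real.exp (-a * (t - 1)) * (Real.cos (b * (t - 1)) + (a / b) * Real.sin (b * (t - 1))))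
    (hv : ∀ t : ℝ, v t = y t + t_p * deriv y t)
    (hφ : φ ∈ Set.Ioo 0 π)
    (hφroot : t_p * b * Real.cos φ = (a * t_p - 1) * Real.sin φ) :
    (∀ ψ ∈ Set.Ioo 0 π, t_p * b * Real.cos ψ = (a * t_p - 1) * Real.sin ψ → ψ = φ) ∧
      v (1 + φ / b) =
        -Real.exp (-φ * a / b) * Real.sqrt (1 - 2 * a * t_p + t_p ^ 2 * (a ^ 2 + b ^ 2)) ∧
      deriv v (1 + φ / b) = 0 ∧
      ∀ t : ℝ, 1 ≤ t →
        v t ≥ -Real.exp (-φ * a / b) *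
          Real.sqrt (1 - 2 * a * t_p + t_p ^ 2 * (a ^ 2 + b ^ 2)) := by
  have ha0 : 0 < a := by rw [ha]; positivity
  have hb0 : 0 < b := by
    have := sub_pos.2 hub
    rw [hb]; positivity
  have hp : 0 < t_p * b := mul_pos htp hb0
  rw [show 1 - 2 * a * t_p + t_p ^ 2 * (a ^ 2 + b ^ 2) = (a * t_p - 1) ^ 2 + (t_p * b) ^ 2 by ring]
  obtain ⟨hsin, hcos⟩ := sin_cos_mul_sqrt_of_mul_cos_eq_mul_sin hp hφ hφroot
  set s := √((a * t_p - 1) ^ 2 + (t_p * b) ^ 2)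
  have hcos' : cos φ * s = a / b * (t_p * b) - 1 := by rw [hcos]; field_simp
  have hshift (t : ℝ) : b * (t - (1 + φ / b)) = b * (t - 1) - φ := by field_simp; ring
  have hy' (t : ℝ) : y t = underdampedStep (a / b) (b * (t - 1)) := by
    rw [hy, underdampedStep]; congr 2; field_simp
  have hv' (t : ℝ) :
      v t = -exp (-φ * a / b) * s * underdampedStep (a / b) (b * (t - (1 + φ / b))) := by
    have key := underdampedStep_add_phase hsin hcos' (b * (t - (1 + φ / b)))
    rw [hshift, sub_add_cancel, show -(a / b) * φ = -φ * a / b by ring] at key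
    rw [hv, hy', funext hy', (hasDerivAt_underdampedStep_comp _ _ _ t).deriv, hshift]
    linear_combination key
  refine ⟨fun ψ hψ hψroot => eq_of_mul_cos_eq_mul_sin hp hψ hφ hψroot hφroot, ?_, ?_, fun t ht => ?_⟩
  · rw [hv', sub_self, mul_zero, underdampedStep_zero, mul_one]
  · rw [funext hv', ((hasDerivAt_underdampedStep_comp _ _ _ _).const_mul _).deriv]
    simp
  · have hstep : underdampedStep (a / b) (b * (t - (1 + φ / b))) ≤ 1 :=
      underdampedStep_le_one (by positivity) (by rw [hshift]; nlinarith [hφ.2])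
    have hamp : 0 ≤ exp (-φ * a / b) * s := by positivity
    rw [hv']
    nlinarith
end

section
/- Let a, b be real numbers with a ≠ 0 and b ≠ 0, and let y(t) = e^{−a(t−1)}(cos(b(t−1)) + (a/b)·sin(b(t−1))). Define F(t) = (e^{−2a(t−1)}/(4 a b^2 (a^2+b^2)))·(−(a^2+b^2)^2 + a^2(a^2 − 3 b^2)·cos(2 b (t−1)) + a b (−3 a^2 + b^2)·sin(2 b (t−1))). Then F'(t) = y(t)^2 for every real t; that is, F is an antiderivative of the squared error y^2. -/
/-! With `s = t - 1`, the double-angle formulas put `y²` in the form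
`e^{-2as} (c + p cos 2bs + q sin 2bs)`. `F` has the same form, and differentiation acts on such
functions by a linear map of the coefficients `(c, p, q)`, so the claim reduces to matching three
coefficients. -/

open Real

theorem hasDerivAt_exp_mul_trig (k ω c p q x : ℝ) :
    HasDerivAt (fun s => exp (k * s) * (c + p * cos (ω * s) + q * sin (ω * s)))
      (exp (k * x) *
        (k * c + (k * p + ω * q) * cos (ω * x) + (k * q - ω * p) * sin (ω * x))) x := by
  have hlin (m : ℝ) : HasDerivAt (fun s => m * s) m x := by
    simpa using (hasDerivAt_id x).const_mul m
  have htrig : HasDerivAt (fun s => c + p * cos (ω * s) + q * sin (ω * s))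
      (p * (-sin (ω * x) * ω) + q * (cos (ω * x) * ω)) x :=
    (((hlin ω).cos.const_mul p).const_add c).add ((hlin ω).sin.const_mul q)
  exact ((hlin k).exp.mul htrig).congr_deriv (by ring)

theorem cos_add_mul_sin_sq (r θ : ℝ) :
    (cos θ + r * sin θ) ^ 2 =
      (1 + r ^ 2) / 2 + (1 - r ^ 2) / 2 * cos (2 * θ) + r * sin (2 * θ) := by
  rw [cos_two_mul, sin_two_mul]
  linear_combination r ^ 2 * sin_sq_add_cos_sq θ

theorem sq_exp_mul_cos_add_div_mul_sin (a b s : ℝ) :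
    (exp (-a * s) * (cos (b * s) + a / b * sin (b * s))) ^ 2 =
      exp (-2 * a * s) * ((1 + (a / b) ^ 2) / 2 + (1 - (a / b) ^ 2) / 2 * cos (2 * b * s)
        + a / b * sin (2 * b * s)) := by
  rw [mul_pow, cos_add_mul_sin_sq, ← exp_nat_mul]
  ring_nf

/-- The closed-form function `F` (denoted `ISE_a` in the paper) is an antiderivative of the
squared error `y²`, where `y(t) = e^{−a(t−1)}(cos(b(t−1)) + (a/b)·sin(b(t−1)))`. -/
theorem stmt6 (a b : ℝ) (y F : ℝ → ℝ) (ha : a ≠ 0) (hb : b ≠ 0)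
    (hy : ∀ t : ℝ, y t =
      Real.exp (-a * (t - 1)) * (Real.cos (b * (t - 1)) + (a / b) * Real.sin (b * (t - 1))))
    (hF : ∀ t : ℝ, F t =
      (Real.exp (-2 * a * (t - 1)) / (4 * a * b ^ 2 * (a ^ 2 + b ^ 2))) *
        (-(a ^ 2 + b ^ 2) ^ 2 + a ^ 2 * (a ^ 2 - 3 * b ^ 2) * Real.cos (2 * b * (t - 1))
          + a * b * (-3 * a ^ 2 + b ^ 2) * Real.sin (2 * b * (t - 1)))) :
    ∀ t : ℝ, deriv F t = (y t) ^ 2 := by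
  intro t
  set D := 4 * a * b ^ 2 * (a ^ 2 + b ^ 2)
  have hD : D ≠ 0 := by positivity
  have hF_shift : F = fun t => exp (-2 * a * (t - 1)) * (-(a ^ 2 + b ^ 2) ^ 2 / D
      + a ^ 2 * (a ^ 2 - 3 * b ^ 2) / D * cos (2 * b * (t - 1))
      + a * b * (-3 * a ^ 2 + b ^ 2) / D * sin (2 * b * (t - 1))) :=
    funext fun t => by rw [hF]; ring
  rw [hF_shift, ((hasDerivAt_exp_mul_trig _ _ _ _ _ _).comp_sub_const t 1).deriv, hy,
    sq_exp_mul_cos_add_div_mul_sin]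
  congr 1
  field_simp
  ring
end

section
/- Let t_p > 0, h_i ∈ ℝ and c > 0. Let y : [0, ∞) → ℝ be continuous, continuously differentiable on [1, ∞), with y(s) = c·e^{−s/t_p} for 0 ≤ s ≤ 1, and suppose that for every non-integer s > 1, y is twice differentiable at s and t_p·y''(s) + y'(s) = −h_i·y(s−1). Then for every integer n ≥ 1 there exist real polynomials P_n of degree at most n−1 and Q_n of degree at most n such that y(s) = P_n(s − n) + e^{−(s−n)/t_p}·Q_n(s − n) for all s ∈ [n, n+1]. -/
/-!
On each interval `[n, n + 1]` the delay term `-h_i y(s - 1)` is, by induction, of the form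
`A(s - n) + e^{-(s - n)/t_p} B(s - n)` with polynomials `A`, `B`. Such a forcing admits a particular
solution of the same form in which each polynomial gains one degree: the polynomial part solves
`P' + t_p P'' = A` and the exponential part `Q' - t_p Q'' = -B`, both solvable in polynomials.
The difference with `y` solves the homogeneous equation `t_p w'' + w' = 0` on the open interval
and is `C¹` up to the endpoints, hence equals `α + β e^{-(s - n)/t_p}`, which is absorbed into the
constant terms.
-/

open Polynomial Real Set

namespace Polynomial

open Finset

theorem degree_iterate_derivative_le {R : Type*} [Semiring R] (p : R[X]) (k : ℕ) :
    (derivative^[k] p).degree ≤ p.degree := by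
  induction k with
  | zero => rfl
  | succ k ih =>
    exact (Function.iterate_succ_apply' derivative k p ▸ degree_derivative_le).trans ih

theorem degree_add_C_lt_add_one {R : Type*} [Semiring R] {p : R[X]} {m : ℕ}
    (hp : p.degree ≤ m) (a : R) : (p + C a).degree < m + 1 := by
  refine (degree_add_le _ _).trans_lt (max_lt ?_ (degree_C_le.trans_lt ?_))
  · exact hp.trans_lt (by exact_mod_cast m.lt_succ_self)
  · exact_mod_cast m.succ_pos

/-- The witness is the Neumann series `∑ (-t D)^k A` of `(1 + t D)⁻¹`, which terminates because
`D = derivative` is nilpotent on `A`. -/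
theorem exists_add_smul_derivative_eq {R : Type*} [CommRing R] (t : R) (A : R[X]) :
    ∃ S : R[X], S.degree ≤ A.degree ∧ S + t • derivative S = A := by
  refine ⟨∑ k ∈ range (A.natDegree + 1), (-t) ^ k • derivative^[k] A, ?_, ?_⟩
  · refine (degree_sum_le _ _).trans (Finset.sup_le fun k _ => ?_)
    exact (degree_smul_le _ _).trans (degree_iterate_derivative_le A k)
  · simp only [map_sum, derivative_smul, ← Function.iterate_succ_apply' derivative, smul_sum,
      smul_smul]
    rw [sum_range_succ', sum_range_succ, iterate_derivative_eq_zero (Nat.lt_succ_self _)]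
    simp [pow_succ, mul_comm t]

theorem exists_derivative_eq {K : Type*} [Field K] [CharZero K] (D : K[X]) :
    ∃ R : K[X], R.degree ≤ D.degree + 1 ∧ derivative R = D := by
  refine ⟨∑ k ∈ range (D.natDegree + 1), monomial (k + 1) (D.coeff k / (k + 1)), ?_, ?_⟩
  · rcases eq_or_ne D 0 with rfl | hD
    · simp
    rw [degree_eq_natDegree hD]
    refine (degree_sum_le _ _).trans (Finset.sup_le fun k hk => (degree_monomial_le _ _).trans ?_)
    exact_mod_cast Nat.succ_le_succ (Nat.lt_succ_iff.1 (mem_range.1 hk))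
  · simp only [map_sum, derivative_monomial, Nat.cast_add_one, add_tsub_cancel_right]
    conv_rhs => rw [as_sum_range' D (D.natDegree + 1) (Nat.lt_succ_self _)]
    refine sum_congr rfl fun k _ => ?_
    rw [div_mul_cancel₀ _ (Nat.cast_add_one_ne_zero k)]

theorem exists_derivative_add_smul_derivative_derivative_eq {K : Type*} [Field K] [CharZero K]
    (t : K) (A : K[X]) :
    ∃ R : K[X], R.degree ≤ A.degree + 1 ∧ derivative R + t • derivative (derivative R) = A := by
  obtain ⟨S, hSA, hS⟩ := exists_add_smul_derivative_eq t A
  obtain ⟨R, hRS, hR⟩ := exists_derivative_eq S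
  exact ⟨R, hRS.trans (add_le_add_left hSA 1), by rw [hR, hS]⟩

end Polynomial

theorem constant_of_hasDerivAt_zero {f : ℝ → ℝ} {a b : ℝ} (hf : ContinuousOn f (Icc a b))
    (hf' : ∀ x ∈ Ioo a b, HasDerivAt f 0 x) : ∀ x ∈ Icc a b, f x = f a := by
  intro x hx
  rcases hx.1.eq_or_lt with rfl | hax
  · rfl
  obtain ⟨c, -, hc⟩ := exists_hasDerivAt_eq_slope f (fun _ => 0) hax
    (hf.mono (Icc_subset_Icc_right hx.2)) fun c hc => hf' c ⟨hc.1, hc.2.trans_le hx.2⟩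
  rw [eq_comm, div_eq_zero_iff, sub_eq_zero, sub_eq_zero] at hc
  exact hc.resolve_right hax.ne'

theorem exists_eq_const_add_mul_exp_of_ode {t a b : ℝ} (ht : t ≠ 0) {w w' w'' : ℝ → ℝ}
    (hw : ContinuousOn w (Icc a b)) (hw' : ContinuousOn w' (Icc a b))
    (hdw : ∀ s ∈ Ioo a b, HasDerivAt w (w' s) s) (hdw' : ∀ s ∈ Ioo a b, HasDerivAt w' (w'' s) s)
    (hode : ∀ s ∈ Ioo a b, t * w'' s + w' s = 0) :
    ∃ α β : ℝ, ∀ s ∈ Icc a b, w s = α + β * exp (-(s - a) / t) := by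
  have hdecay (s : ℝ) :
      HasDerivAt (fun x => exp (-(x - a) / t)) (-exp (-(s - a) / t) / t) s :=
    ((((hasDerivAt_id' s).sub_const a).fun_neg).div_const t).exp.congr_deriv (by ring)
  have hgrowth (s : ℝ) :
      HasDerivAt (fun x => exp ((x - a) / t)) (exp ((s - a) / t) / t) s :=
    (((hasDerivAt_id' s).sub_const a).div_const t).exp.congr_deriv (by ring)
  obtain ⟨K, hK⟩ : ∃ K, ∀ s ∈ Icc a b, w' s = K * exp (-(s - a) / t) := by
    have hconst := constant_of_hasDerivAt_zero (f := fun x => exp ((x - a) / t) * w' x)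
      ((Continuous.continuousOn (by fun_prop)).mul hw') fun x hx =>
        ((hgrowth x).mul (hdw' x hx)).congr_deriv
          (by field_simp; linear_combination exp ((x - a) / t) * hode x hx)
    refine ⟨w' a, fun s hs => ?_⟩
    have h := hconst s hs
    simp only [sub_self, zero_div, exp_zero, one_mul] at h
    rw [← h, neg_div, exp_neg]
    field_simp
  have hconst := constant_of_hasDerivAt_zero (f := fun x => w x + t * K * exp (-(x - a) / t))
    (hw.add (Continuous.continuousOn (by fun_prop))) fun x hx =>
      ((hdw x hx).add ((hdecay x).const_mul (t * K))).congr_deriv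
        (by rw [hK x (Ioo_subset_Icc_self hx)]; field_simp; ring)
  refine ⟨w a + t * K, -(t * K), fun s hs => ?_⟩
  have h := hconst s hs
  simp only [sub_self, neg_zero, zero_div, exp_zero, mul_one] at h
  linarith

noncomputable def polyExp (t a : ℝ) (P Q : ℝ[X]) (s : ℝ) : ℝ :=
  P.eval (s - a) + exp (-(s - a) / t) * Q.eval (s - a)

section polyExp

variable (t a : ℝ) (P Q : ℝ[X])

theorem hasDerivAt_polyExp (s : ℝ) :
    HasDerivAt (polyExp t a P Q) (polyExp t a (derivative P) (derivative Q - t⁻¹ • Q) s) s := by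
  have hP := (P.hasDerivAt (s - a)).comp_sub_const s a
  have hQ := (Q.hasDerivAt (s - a)).comp_sub_const s a
  have hexp : HasDerivAt (fun x => exp (-(x - a) / t)) (exp (-(s - a) / t) * (-1 / t)) s :=
    (((hasDerivAt_id s).sub_const a).neg.div_const t).exp
  refine (hP.add (hexp.mul hQ)).congr_deriv ?_
  simp only [polyExp, eval_sub, eval_smul, smul_eq_mul]
  ring

theorem differentiable_polyExp : Differentiable ℝ (polyExp t a P Q) :=
  fun s => (hasDerivAt_polyExp t a P Q s).differentiableAt

theorem deriv_polyExp :
    deriv (polyExp t a P Q) = polyExp t a (derivative P) (derivative Q - t⁻¹ • Q) :=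
  funext fun s => (hasDerivAt_polyExp t a P Q s).deriv

theorem polyExp_sub_one (s : ℝ) : polyExp t a P Q (s - 1) = polyExp t (a + 1) P Q s := by
  simp only [polyExp, sub_sub, add_comm (1 : ℝ) a]

theorem mul_polyExp (c s : ℝ) : c * polyExp t a P Q s = polyExp t a (c • P) (c • Q) s := by
  simp only [polyExp, eval_smul, smul_eq_mul]
  ring

/-- `t z'' + z'` of `z = polyExp t a P Q` is `polyExp t a (P' + t P'') (t Q'' - Q')`. -/
theorem exists_polyExp_particular_solution (ht : t ≠ 0) (A B : ℝ[X]) :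
    ∃ P Q : ℝ[X], P.degree ≤ A.degree + 1 ∧ Q.degree ≤ B.degree + 1 ∧
      ∀ s, t * deriv (deriv (polyExp t a P Q)) s + deriv (polyExp t a P Q) s =
        polyExp t a A B s := by
  obtain ⟨P, hPA, hP⟩ := exists_derivative_add_smul_derivative_derivative_eq t A
  obtain ⟨Q, hQB, hQ⟩ := exists_derivative_add_smul_derivative_derivative_eq (-t) (-B)
  refine ⟨P, Q, hPA, degree_neg B ▸ hQB, fun s => ?_⟩
  have eP := congrArg (eval (s - a)) hP
  have eQ := congrArg (eval (s - a)) hQ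
  simp only [eval_add, eval_neg, eval_smul, smul_eq_mul] at eP eQ
  simp only [deriv_polyExp, polyExp, derivative_sub, derivative_smul, eval_sub, eval_smul,
    smul_eq_mul]
  set E := exp (-(s - a) / t)
  field_simp
  linear_combination t * eP - t * E * eQ

end polyExp

theorem exists_polyExp_eqOn_of_ode {t a b : ℝ} (ht : t ≠ 0) {y y' y'' : ℝ → ℝ} {A B : ℝ[X]}
    (hy : ContinuousOn y (Icc a b)) (hy' : ContinuousOn y' (Icc a b))
    (hdy : ∀ s ∈ Ioo a b, HasDerivAt y (y' s) s) (hdy' : ∀ s ∈ Ioo a b, HasDerivAt y' (y'' s) s)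
    (hode : ∀ s ∈ Ioo a b, t * y'' s + y' s = polyExp t a A B s)
    {m : ℕ} (hA : A.degree < m) (hB : B.degree < m + 1) :
    ∃ P Q : ℝ[X], P.degree < m + 1 ∧ Q.degree < m + 1 + 1 ∧
      EqOn y (polyExp t a P Q) (Icc a b) := by
  obtain ⟨P, Q, hPA, hQB, hz⟩ := exists_polyExp_particular_solution t a ht A B
  set z := polyExp t a P Q
  have hz' : Differentiable ℝ (deriv z) := by
    rw [deriv_polyExp]
    exact differentiable_polyExp _ _ _ _
  obtain ⟨α, β, hw⟩ := exists_eq_const_add_mul_exp_of_ode ht (w := y - z) (w' := y' - deriv z)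
    (w'' := y'' - deriv (deriv z)) (hy.sub (differentiable_polyExp t a P Q).continuous.continuousOn)
    (hy'.sub hz'.continuous.continuousOn)
    (fun s hs => (hdy s hs).sub (differentiable_polyExp t a P Q s).hasDerivAt)
    (fun s hs => (hdy' s hs).sub (hz' s).hasDerivAt)
    (fun s hs => by simp only [Pi.sub_apply]; linear_combination hode s hs - hz s)
  refine ⟨P + C α, Q + C β,
    degree_add_C_lt_add_one (hPA.trans (Nat.WithBot.add_one_le_of_lt hA)) α,
    degree_add_C_lt_add_one (hQB.trans (Nat.WithBot.add_one_le_of_lt hB)) β, fun s hs => ?_⟩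
  have h := hw s hs
  simp only [Pi.sub_apply, z, polyExp] at h
  simp only [polyExp, eval_add, eval_C]
  linear_combination h

/-- `P.degree < n` rather than `P.degree ≤ n - 1`, so that on `[0, 1]` the polynomial part
vanishes. -/
def HasPolyExpForm (t : ℝ) (y : ℝ → ℝ) (n : ℕ) : Prop :=
  ∃ P Q : ℝ[X], P.degree < n ∧ Q.degree < n + 1 ∧ EqOn y (polyExp t n P Q) (Icc n (n + 1))

theorem ne_intCast_of_mem_Ioo {n : ℕ} {s : ℝ} (hs : s ∈ Ioo (n : ℝ) (n + 1)) (m : ℤ) :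
    s ≠ m := by
  rintro rfl
  have : (n : ℤ) < m ∧ m < n + 1 := ⟨by exact_mod_cast hs.1, by exact_mod_cast hs.2⟩
  omega

theorem HasPolyExpForm.succ {t h : ℝ} {y : ℝ → ℝ} (ht : t ≠ 0)
    (hC1 : ContDiffOn ℝ 1 y (Ici 1))
    (hdde : ∀ s : ℝ, 1 < s → (∀ m : ℤ, s ≠ m) →
      DifferentiableAt ℝ y s ∧ DifferentiableAt ℝ (deriv y) s ∧
        t * deriv (deriv y) s + deriv y s = -h * y (s - 1))
    {n : ℕ} (hn : HasPolyExpForm t y n) : HasPolyExpForm t y (n + 1) := by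
  obtain ⟨P, Q, hP, hQ, hy⟩ := hn
  have hIcc : Icc ((n + 1 : ℕ) : ℝ) ((n + 1 : ℕ) + 1) ⊆ Ici 1 := fun s hs =>
    le_trans (by exact_mod_cast Nat.le_add_left 1 n) hs.1
  set y' := derivWithin y (Ici 1)
  have hinterior : ∀ s ∈ Ioo ((n + 1 : ℕ) : ℝ) ((n + 1 : ℕ) + 1),
      HasDerivAt y (y' s) s ∧ HasDerivAt y' (deriv (deriv y) s) s ∧
        t * deriv (deriv y) s + y' s = polyExp t (n + 1 : ℕ) (-h • P) (-h • Q) s := by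
    intro s hs
    have hs1 : 1 < s := lt_of_le_of_lt (by exact_mod_cast Nat.le_add_left 1 n) hs.1
    have hy' : y' =ᶠ[nhds s] deriv y := by
      filter_upwards [Ioi_mem_nhds hs1] with x hx using derivWithin_of_mem_nhds (Ici_mem_nhds hx)
    obtain ⟨hd, hdd, hode⟩ := hdde s hs1 (ne_intCast_of_mem_Ioo hs)
    refine ⟨hy'.self_of_nhds ▸ hd.hasDerivAt, hdd.hasDerivAt.congr_of_eventuallyEq hy', ?_⟩
    have hprev : s - 1 ∈ Icc (n : ℝ) (n + 1) := by
      push_cast at hs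
      constructor <;> linarith [hs.1, hs.2]
    rw [hy'.self_of_nhds, hode, hy hprev, polyExp_sub_one, mul_polyExp]
    push_cast
    rfl
  exact exists_polyExp_eqOn_of_ode ht (hC1.continuousOn.mono hIcc)
    ((hC1.continuousOn_derivWithin (uniqueDiffOn_Ici 1) le_rfl).mono hIcc)
    (fun s hs => (hinterior s hs).1) (fun s hs => (hinterior s hs).2.1)
    (fun s hs => (hinterior s hs).2.2) ((degree_smul_le _ _).trans_lt hP)
    ((degree_smul_le _ _).trans_lt hQ)

theorem stmt11_general (t_p h_i c : ℝ) (y : ℝ → ℝ)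
    (htp : 0 < t_p)
    (hC1 : ContDiffOn ℝ 1 y (Ici (1 : ℝ)))
    (hist : ∀ s : ℝ, 0 ≤ s → s ≤ 1 → y s = c * Real.exp (-s / t_p))
    (hdde : ∀ s : ℝ, 1 < s → (∀ m : ℤ, s ≠ (m : ℝ)) →
      DifferentiableAt ℝ y s ∧ DifferentiableAt ℝ (deriv y) s ∧
        t_p * deriv (deriv y) s + deriv y s = -h_i * y (s - 1)) :
    ∀ n : ℕ, 1 ≤ n → ∃ P Q : Polynomial ℝ,
      P.degree ≤ ((n - 1 : ℕ) : WithBot ℕ) ∧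
      Q.degree ≤ (n : WithBot ℕ) ∧
      ∀ s ∈ Icc (n : ℝ) ((n : ℝ) + 1),
        y s = P.eval (s - (n : ℝ)) +
          Real.exp (-(s - (n : ℝ)) / t_p) * Q.eval (s - (n : ℝ)) := by
  have hform (n : ℕ) : HasPolyExpForm t_p y n := by
    induction n with
    | zero =>
      refine ⟨0, C c, by simp, degree_C_le.trans_lt (by exact_mod_cast zero_lt_one),
        fun s hs => ?_⟩
      simp only [CharP.cast_eq_zero, zero_add, mem_Icc] at hs
      simp [polyExp, hist s hs.1 hs.2, mul_comm]
    | succ n ih => exact ih.succ htp.ne' hC1 hdde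
  intro n hn
  obtain ⟨k, rfl⟩ : ∃ k, n = k + 1 := ⟨n - 1, by omega⟩
  obtain ⟨P, Q, hP, hQ, hy⟩ := hform (k + 1)
  exact ⟨P, Q, by simpa using Order.le_of_lt_succ hP, Order.le_of_lt_succ hQ, hy⟩

/-- Method of steps for the second operation mode of the proposed controller with a pure
exponential initial segment: the solution of `t_p y'' + y' = −h_i y(s−1)` with
`y(s) = c·e^{−s/t_p}` on `[0, 1]` is, on each interval `[n, n+1]`, a polynomial of degree
at most `n−1` plus `e^{−(s−n)/t_p}` times a polynomial of degree at most `n`. -/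
theorem stmt11 (t_p h_i c : ℝ) (y : ℝ → ℝ)
    (htp : 0 < t_p) (hc : 0 < c)
    (hcont : ContinuousOn y (Ici (0 : ℝ)))
    (hC1 : ContDiffOn ℝ 1 y (Ici (1 : ℝ)))
    (hist : ∀ s : ℝ, 0 ≤ s → s ≤ 1 → y s = c * Real.exp (-s / t_p))
    (hdde : ∀ s : ℝ, 1 < s → (∀ m : ℤ, s ≠ (m : ℝ)) →
      DifferentiableAt ℝ y s ∧ DifferentiableAt ℝ (deriv y) s ∧
        t_p * deriv (deriv y) s + deriv y s = -h_i * y (s - 1)) :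
    ∀ n : ℕ, 1 ≤ n → ∃ P Q : Polynomial ℝ,
      P.degree ≤ ((n - 1 : ℕ) : WithBot ℕ) ∧
      Q.degree ≤ (n : WithBot ℕ) ∧
      ∀ s ∈ Icc (n : ℝ) ((n : ℝ) + 1),
        y s = P.eval (s - (n : ℝ)) +
          Real.exp (-(s - (n : ℝ)) / t_p) * Q.eval (s - (n : ℝ)) :=
  stmt11_general t_p h_i c y htp hC1 hist hdde
end

section
/- Let t_p > 0. Then there exists a unique z_a ∈ (π/2, π) such that tan(z_a) = −(t_p/(1+t_p))·z_a; moreover z_a is the first positive solution of this equation, i.e., there is no solution z ∈ (0, π/2]. -/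
/-!
On `(π/2, π)` the function `z ↦ tan z + c z` is strictly increasing, so it has at most one
zero there. Clearing the (negative) denominator `cos z`, the equation becomes
`sin z + c z cos z = 0`, whose left side is continuous, equals `1` at `π/2` and `-cπ` at `π`;
the intermediate value theorem gives a zero. On `(0, π/2)` the two sides have opposite signs,
and at `π/2` Mathlib's `tan (π/2) = 0` differs from `-cπ/2`.
-/

open Real Set

theorem strictMonoOn_tan_Ioo_pi_div_two_pi : StrictMonoOn tan (Ioo (π / 2) π) := by
  rintro x ⟨hx₁, hx₂⟩ y ⟨hy₁, hy₂⟩ hxy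
  rw [← tan_sub_pi x, ← tan_sub_pi y]
  exact strictMonoOn_tan ⟨by linarith, by linarith⟩ ⟨by linarith, by linarith⟩ (by linarith)

section

variable {c : ℝ}

theorem injOn_tan_add_mul_self (hc : 0 ≤ c) :
    InjOn (fun z ↦ tan z + c * z) (Ioo (π / 2) π) :=
  (strictMonoOn_tan_Ioo_pi_div_two_pi.add_monotone
    fun _ _ _ _ hxy ↦ mul_le_mul_of_nonneg_left hxy hc).injOn

theorem exists_mem_Ioo_tan_eq_neg_mul_self (hc : 0 < c) :
    ∃ z ∈ Ioo (π / 2) π, tan z = -c * z := by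
  have hcont : ContinuousOn (fun z ↦ sin z + c * z * cos z) (Icc (π / 2) π) := by fun_prop
  have hzero : (0 : ℝ) ∈
      Ioo (sin π + c * π * cos π) (sin (π / 2) + c * (π / 2) * cos (π / 2)) := by
    simp only [sin_pi, cos_pi, sin_pi_div_two, cos_pi_div_two]
    constructor <;> nlinarith [pi_pos]
  obtain ⟨z, hz, hsum⟩ := intermediate_value_Ioo' (by linarith [pi_pos]) hcont hzero
  have hcos : cos z ≠ 0 := (cos_neg_of_pi_div_two_lt_of_lt hz.1 (by linarith [hz.2, pi_pos])).ne
  refine ⟨z, hz, ?_⟩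
  rw [tan_eq_sin_div_cos, div_eq_iff hcos]
  linarith

theorem tan_ne_neg_mul_self_of_mem_Ioc (hc : 0 < c) {z : ℝ} (hz : z ∈ Ioc 0 (π / 2)) :
    tan z ≠ -c * z := by
  obtain ⟨hz₀, hz₁⟩ := hz
  rcases hz₁.lt_or_eq with hz₁ | rfl
  · have := tan_pos_of_pos_of_lt_pi_div_two hz₀ hz₁
    nlinarith
  · rw [tan_pi_div_two]
    nlinarith [pi_pos]

end

/-- Existence and uniqueness of the ultimate frequency `z_a`: for `t_p > 0` there is a
unique `z_a ∈ (π/2, π)` with `tan z_a = −(t_p/(1+t_p))·z_a`, and there is no solution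
in `(0, π/2]`, so `z_a` is the first positive solution. -/
theorem stmt14 (t_p : ℝ) (htp : 0 < t_p) :
    (∃! z : ℝ, z ∈ Ioo (π / 2) π ∧ Real.tan z = -(t_p / (1 + t_p)) * z) ∧
      ∀ z ∈ Ioc (0 : ℝ) (π / 2), Real.tan z ≠ -(t_p / (1 + t_p)) * z := by
  have hc : 0 < t_p / (1 + t_p) := by positivity
  obtain ⟨z, hz, hzeq⟩ := exists_mem_Ioo_tan_eq_neg_mul_self hc
  refine ⟨⟨z, ⟨hz, hzeq⟩, fun y ⟨hy, hyeq⟩ ↦ injOn_tan_add_mul_self hc.le hy hz ?_⟩,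
    fun _ ↦ tan_ne_neg_mul_self_of_mem_Ioc hc⟩
  simp only [hyeq, hzeq]
  ring
end
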